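/- For a single Kraus operator F on B with N = F†F, a pure state |ψ^{AB}⟩ = Σ_i √ω_i |i⟩|β_i⟩, and the corresponding maximally entangled state |φ^{AB}⟩ = (1/√d) Σ_i |i⟩|β_i⟩, the unnormalized coherences satisfy p'·C_{l1}(ρ^A') ≤ (d/2)·E(|ψ⟩)·p''·C_{l1}(ρ^A''), where ρ^A', p' (resp. ρ^A'', p'') are the normalized post-operation A-state and outcome probability for |ψ⟩ (resp. |φ⟩). -/

import Mathlib

/-! Writing `G i k = ⟨F β_k, F β_i⟩`, the unnormalised post-operation states have entries
`√(ω_i ω_k) · G i k` for `ψ` and `G i k / d` for `φ`. For `i ≠ k` the products `ω_i ω_k` and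
`ω_k ω_i` both occur in the off-diagonal sum defining `E`, so `√(ω_i ω_k) ≤ E / 2`, and the
bound holds entrywise with the factor `(d / 2) · E`. The factors `p'`, `p''` only undo the
normalisation. -/

open Matrix Kronecker BigOperators Finset ComplexOrder

noncomputable def l1Coh {d : ℕ} (ρ : Matrix (Fin d) (Fin d) ℂ) : ℝ :=
  ∑ i, ∑ j, if i ≠ j then ‖ρ i j‖ else 0

noncomputable def ptraceB {dA dB : ℕ}
    (ρ : Matrix (Fin dA × Fin dB) (Fin dA × Fin dB) ℂ) : Matrix (Fin dA) (Fin dA) ℂ :=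
  fun i k => ∑ j, ρ (i, j) (k, j)

noncomputable def postA {dA dB : ℕ} (F : Matrix (Fin dB) (Fin dB) ℂ)
    (χ : Fin dA × Fin dB → ℂ) : Matrix (Fin dA) (Fin dA) ℂ :=
  ptraceB (((1 : Matrix (Fin dA) (Fin dA) ℂ) ⊗ₖ F) * Matrix.vecMulVec χ (star χ) *
    ((1 : Matrix (Fin dA) (Fin dA) ℂ) ⊗ₖ F)ᴴ)

section l1Coh

variable {n : ℕ}

lemma l1Coh_nonneg (ρ : Matrix (Fin n) (Fin n) ℂ) : 0 ≤ l1Coh ρ :=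
  sum_nonneg fun _ _ => sum_nonneg fun _ _ => by split_ifs <;> positivity

lemma l1Coh_smul (c : ℂ) (ρ : Matrix (Fin n) (Fin n) ℂ) : l1Coh (c • ρ) = ‖c‖ * l1Coh ρ := by
  simp only [l1Coh, mul_sum, mul_ite, mul_zero, Matrix.smul_apply, smul_eq_mul, norm_mul]

lemma mul_l1Coh_inv_smul {r : ℝ} (hr : 0 < r) (ρ : Matrix (Fin n) (Fin n) ℂ) :
    r * l1Coh ((r : ℂ)⁻¹ • ρ) = l1Coh ρ := by
  rw [l1Coh_smul, norm_inv, Complex.norm_of_nonneg hr.le, mul_inv_cancel_left₀ hr.ne']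

lemma mul_l1Coh_inv_smul_le (r : ℝ) (ρ : Matrix (Fin n) (Fin n) ℂ) :
    r * l1Coh ((r : ℂ)⁻¹ • ρ) ≤ l1Coh ρ := by
  rcases lt_or_ge 0 r with hr | hr
  · exact (mul_l1Coh_inv_smul hr ρ).le
  · exact (mul_nonpos_of_nonpos_of_nonneg hr (l1Coh_nonneg _)).trans (l1Coh_nonneg ρ)

lemma l1Coh_le_mul_of_norm_le {ρ σ : Matrix (Fin n) (Fin n) ℂ} {c : ℝ}
    (h : ∀ i j, i ≠ j → ‖ρ i j‖ ≤ c * ‖σ i j‖) : l1Coh ρ ≤ c * l1Coh σ := by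
  simp only [l1Coh, mul_sum, mul_ite, mul_zero]
  gcongr with i _ j _
  split_ifs with hij
  · exact h i j hij
  · exact le_rfl

end l1Coh

lemma one_kronecker_mulVec_apply {dA dB : ℕ} (F : Matrix (Fin dB) (Fin dB) ℂ)
    (χ : Fin dA × Fin dB → ℂ) (i : Fin dA) (j : Fin dB) :
    (((1 : Matrix (Fin dA) (Fin dA) ℂ) ⊗ₖ F) *ᵥ χ) (i, j) = (F *ᵥ fun a => χ (i, a)) j := by
  simp [mulVec, dotProduct, Fintype.sum_prod_type, one_apply, ite_mul]

lemma postA_apply {dA dB : ℕ} (F : Matrix (Fin dB) (Fin dB) ℂ) (χ : Fin dA × Fin dB → ℂ)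
    (i k : Fin dA) :
    postA F χ i k = (F *ᵥ fun a => χ (i, a)) ⬝ᵥ star (F *ᵥ fun b => χ (k, b)) := by
  rw [postA, mul_vecMulVec, vecMulVec_mul, ← star_mulVec]
  simp only [ptraceB, vecMulVec_apply, Pi.star_apply, one_kronecker_mulVec_apply, dotProduct]

lemma norm_postA_apply_of_eq_mul {dA dB : ℕ} (F : Matrix (Fin dB) (Fin dB) ℂ)
    {χ : Fin dA × Fin dB → ℂ} (c : Fin dA → ℂ) (β : Fin dA → Fin dB → ℂ)
    (hχ : ∀ i a, χ (i, a) = c i * β i a) (i k : Fin dA) :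
    ‖postA F χ i k‖ = ‖c i‖ * ‖c k‖ * ‖(F *ᵥ β i) ⬝ᵥ star (F *ᵥ β k)‖ := by
  have hrow : ∀ i, (fun a => χ (i, a)) = c i • β i := fun i => funext fun a => hχ i a
  rw [postA_apply, hrow, hrow, mulVec_smul, mulVec_smul, star_smul, dotProduct_smul,
    smul_dotProduct, smul_eq_mul, smul_eq_mul, norm_mul, norm_mul, norm_star]
  ring

lemma two_mul_le_sum_offDiag {ι : Type*} [Fintype ι] [DecidableEq ι] {ω : ι → ℝ}
    (hω : ∀ i, 0 ≤ ω i) {i k : ι} (hik : i ≠ k) :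
    2 * (ω i * ω k) ≤ ∑ a, ∑ b, if a ≠ b then ω a * ω b else 0 := by
  have hnonneg : ∀ a b, 0 ≤ if a ≠ b then ω a * ω b else 0 := fun a b => by
    split_ifs
    · exact mul_nonneg (hω a) (hω b)
    · exact le_rfl
  calc 2 * (ω i * ω k)
      = (if i ≠ k then ω i * ω k else 0) + (if k ≠ i then ω k * ω i else 0) := by
        rw [if_pos hik, if_pos hik.symm]; ring
    _ ≤ (∑ b, if i ≠ b then ω i * ω b else 0) + ∑ b, if k ≠ b then ω k * ω b else 0 := by
        gcongr <;> exact single_le_sum (fun b _ => hnonneg _ b) (mem_univ _)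
    _ ≤ ∑ a, ∑ b, if a ≠ b then ω a * ω b else 0 :=
        add_le_sum (fun a _ => sum_nonneg fun b _ => hnonneg a b) (mem_univ i) (mem_univ k) hik

lemma sqrt_mul_sqrt_le_half_sqrt_sum_offDiag {ι : Type*} [Fintype ι] [DecidableEq ι]
    {ω : ι → ℝ} (hω : ∀ i, 0 ≤ ω i) {i k : ι} (hik : i ≠ k) :
    Real.sqrt (ω i) * Real.sqrt (ω k)
      ≤ Real.sqrt (2 * ∑ a, ∑ b, if a ≠ b then ω a * ω b else 0) / 2 := by
  have hpair := two_mul_le_sum_offDiag hω hik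
  have hprod := mul_nonneg (hω i) (hω k)
  rw [le_div_iff₀ two_pos, Real.le_sqrt (by positivity) (by linarith), mul_pow, mul_pow,
    Real.sq_sqrt (hω i), Real.sq_sqrt (hω k)]
  linarith

theorem single_kraus_RCC_bound_general
    {d dB : ℕ}
    (ω : Fin d → ℝ) (hω : ∀ i, 0 ≤ ω i)
    (β : Fin d → Fin dB → ℂ)
    (ψ φ : Fin d × Fin dB → ℂ)
    (hψ : ∀ i j, ψ (i, j) = (Real.sqrt (ω i) : ℂ) * β i j)
    (hφ : ∀ i j, φ (i, j) = ((Real.sqrt d : ℝ) : ℂ)⁻¹ * β i j)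
    (F : Matrix (Fin dB) (Fin dB) ℂ)
    (p' p'' : ℝ)
    (hp''pos : 0 < p'')
    (E : ℝ) (hE : E = Real.sqrt (2 * ∑ i, ∑ j, if i ≠ j then ω i * ω j else 0)) :
    p' * l1Coh ((p' : ℂ)⁻¹ • postA F ψ)
      ≤ ((d : ℝ) / 2) * E * (p'' * l1Coh ((p'' : ℂ)⁻¹ • postA F φ)) := by
  have hentry : ∀ i k, i ≠ k → ‖postA F ψ i k‖ ≤ (d / 2 * E) * ‖postA F φ i k‖ := by
    intro i k hik
    have hd : (d : ℝ) ≠ 0 := Nat.cast_ne_zero.2 (Fin.pos i).ne'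
    rw [norm_postA_apply_of_eq_mul F _ β hψ, norm_postA_apply_of_eq_mul F _ β hφ]
    simp only [norm_inv, Complex.norm_real, Real.norm_of_nonneg (Real.sqrt_nonneg _)]
    calc Real.sqrt (ω i) * Real.sqrt (ω k) * ‖(F *ᵥ β i) ⬝ᵥ star (F *ᵥ β k)‖
        ≤ E / 2 * ‖(F *ᵥ β i) ⬝ᵥ star (F *ᵥ β k)‖ := by
          rw [hE]
          gcongr
          exact sqrt_mul_sqrt_le_half_sqrt_sum_offDiag hω hik
      _ = _ := by field_simp; rw [Real.sq_sqrt (Nat.cast_nonneg d)]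
  calc p' * l1Coh ((p' : ℂ)⁻¹ • postA F ψ)
      ≤ l1Coh (postA F ψ) := mul_l1Coh_inv_smul_le p' _
    _ ≤ d / 2 * E * l1Coh (postA F φ) := l1Coh_le_mul_of_norm_le hentry
    _ = _ := by rw [mul_l1Coh_inv_smul hp''pos]

/-- Single-Kraus-operator step of Theorem 3:
`p'·C(ρ^A') ≤ (d/2)·E(ψ)·p''·C(ρ^A'')`, with `E(ψ) = √(2 Σ_{i≠j} ω_i ω_j)`. -/
theorem single_kraus_RCC_bound
    {d dB : ℕ}
    (ω : Fin d → ℝ) (hω : ∀ i, 0 ≤ ω i) (hωsum : ∑ i, ω i = 1)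
    (β : Fin d → Fin dB → ℂ)
    (hβ : ∀ i k, ∑ j, (starRingEnd ℂ) (β i j) * β k j = if i = k then 1 else 0)
    (ψ φ : Fin d × Fin dB → ℂ)
    (hψ : ∀ i j, ψ (i, j) = (Real.sqrt (ω i) : ℂ) * β i j)
    (hφ : ∀ i j, φ (i, j) = ((Real.sqrt d : ℝ) : ℂ)⁻¹ * β i j)
    (F : Matrix (Fin dB) (Fin dB) ℂ)
    (p' p'' : ℝ)
    (hp' : p' = ((postA F ψ).trace).re) (hp'' : p'' = ((postA F φ).trace).re)
    (hp'pos : 0 < p') (hp''pos : 0 < p'')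
    (E : ℝ) (hE : E = Real.sqrt (2 * ∑ i, ∑ j, if i ≠ j then ω i * ω j else 0)) :
    p' * l1Coh ((p' : ℂ)⁻¹ • postA F ψ)
      ≤ ((d : ℝ) / 2) * E * (p'' * l1Coh ((p'' : ℂ)⁻¹ • postA F φ)) :=
  single_kraus_RCC_bound_general ω hω β ψ φ hψ hφ F p' p'' hp''pos E hE
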